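/- arXiv:1608.04508 — 2 statements merged into one kernel-verified Lean document; each statement's English description precedes it below -/
import Mathlib

section
/- The primal feasible solution (ρ, T) of the quantum Lovász number SDP for N_α achieves value ⟨Φ|(I ⊗ ρ + T)|Φ⟩ = 2 + cos²α + 1/cos²α, where |Φ⟩ = |00⟩ + |11⟩ + |22⟩, ρ = (cos²α |0⟩⟨0| + |1⟩⟨1|)/(1+cos²α), T = T₁ ⊗ T₂ + R with T₁ = (1/(1+cos²α))(|0⟩⟨0| − sec²α |1⟩⟨1| + tan²α |2⟩⟨2|), T₂ = cos⁴α |0⟩⟨0| − |1⟩⟨1|, R = |00⟩⟨11| + |11⟩⟨00|. -/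
open Matrix Kronecker Complex ComplexOrder

noncomputable section

abbrev M3 : Type := Matrix (Fin 3) (Fin 3) ℂ
abbrev M9 : Type := Matrix (Fin 3 × Fin 3) (Fin 3 × Fin 3) ℂ

/-- |i⟩⟨j| on ℂ³ -/
def ket (i j : Fin 3) : M3 := Matrix.single i j 1

def E (α : ℝ) : M3 := (Real.sin α : ℂ) • ket 0 1 + ket 1 2
def D (α : ℝ) : M3 := (Real.cos α : ℂ) • ket 2 1 + ket 1 0

def u (α : ℝ) : Fin 3 × Fin 3 → ℂ := fun p =>
  (((if p = (1,0) then Real.sin α else 0) + (if p = (2,1) then 1 else 0)) /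
    Real.sqrt (1 + Real.sin α ^ 2) : ℝ)

def v (α : ℝ) : Fin 3 × Fin 3 → ℂ := fun p =>
  (((if p = (1,2) then Real.cos α else 0) + (if p = (0,1) then 1 else 0)) /
    Real.sqrt (1 + Real.cos α ^ 2) : ℝ)

/-- Projection onto span{|u_α⟩, |v_α⟩}, the support of the Choi matrix of N_α. -/
def Pproj (α : ℝ) : M9 :=
  vecMulVec (u α) (star (u α)) + vecMulVec (v α) (star (v α))

/-- Partial trace over the first (A) factor. -/
def trA (M : M9) : M3 := fun i j => ∑ k, M (k, i) (k, j)

/-- Partial trace over the second (B) factor. -/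
def trB (M : M9) : M3 := fun i j => ∑ k, M (i, k) (j, k)

def Phi : Fin 3 × Fin 3 → ℂ := fun p => if p.1 = p.2 then 1 else 0

def ρmat (α : ℝ) : M3 :=
  ((Real.cos α ^ 2 / (1 + Real.cos α ^ 2) : ℝ) : ℂ) • ket 0 0 +
  ((1 / (1 + Real.cos α ^ 2) : ℝ) : ℂ) • ket 1 1

def T1 (α : ℝ) : M3 :=
  ((1 / (1 + Real.cos α ^ 2) : ℝ) : ℂ) •
    (ket 0 0 - (1 / Real.cos α ^ 2 : ℂ) • ket 1 1 + (Real.sin α ^ 2 / Real.cos α ^ 2 : ℂ) • ket 2 2)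

def T2 (α : ℝ) : M3 := (Real.cos α ^ 4 : ℂ) • ket 0 0 - ket 1 1

def Tmat (α : ℝ) : M9 := T1 α ⊗ₖ T2 α + (ket 0 1 ⊗ₖ ket 0 1 + ket 1 0 ⊗ₖ ket 1 0)

/-! Writing `Φ = vec 1`, the Kronecker identity `(A ⊗ B) vec X = vec (B X Aᵀ)` gives
`⟨Φ|(A ⊗ B)|Φ⟩ = tr (B Aᵀ)`. Hence `I ⊗ ρ` contributes `tr ρ = 1`, each of the two terms of `R`
contributes `1`, and `T₁ ⊗ T₂` contributes `(cos⁴ α + sec² α) / (1 + cos² α) = cos² α - 1 + sec² α`,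
since `c⁶ + 1 = (c² + 1)(c⁴ - c² + 1)`. -/

namespace Matrix

variable {n R : Type*} [Fintype n] [DecidableEq n] [CommSemiring R] [StarRing R]

theorem star_vec_one_dotProduct_kronecker_mulVec_vec_one (A B : Matrix n n R) :
    star (vec (1 : Matrix n n R)) ⬝ᵥ ((A ⊗ₖ B) *ᵥ vec 1) = trace (B * Aᵀ) := by
  rw [kronecker_mulVec_vec, star_vec_dotProduct_vec, conjTranspose_one, Matrix.one_mul,
    Matrix.mul_one]

end Matrix

theorem Phi_eq_vec_one : Phi = vec (1 : M3) := by
  ext ⟨i, j⟩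
  simp [Phi, vec, one_apply, eq_comm]

theorem trace_ket_mul_transpose_self (i j : Fin 3) : trace (ket i j * (ket i j)ᵀ) = 1 := by
  simp [ket, transpose_single]

theorem trace_ρmat (α : ℝ) : trace (ρmat α) = 1 := by
  simp only [ρmat, ket, trace_add, trace_smul, trace_single_eq_same, smul_eq_mul, mul_one]
  rw [← ofReal_add, ← ofReal_one]
  congr 1
  field_simp
  ring

theorem trace_T2_mul_transpose_T1 {α : ℝ} (hα : Real.cos α ≠ 0) :
    trace (T2 α * (T1 α)ᵀ) = ((Real.cos α ^ 2 - 1 + 1 / Real.cos α ^ 2 : ℝ) : ℂ) := by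
  have hc : Complex.cos α ≠ 0 := by rw [← ofReal_cos]; exact_mod_cast hα
  have h : 1 + Complex.cos α ^ 2 ≠ 0 := by
    rw [← ofReal_cos]; exact_mod_cast (by positivity : 1 + Real.cos α ^ 2 ≠ 0)
  simp only [trace, T2, ofReal_cos, ket, smul_single, smul_eq_mul, mul_one, T1,
    one_div, ofReal_inv, ofReal_add, ofReal_one, ofReal_pow, ofReal_sin, smul_add, transpose_add,
    transpose_smul, transpose_sub, transpose_single, diag_apply, mul_apply, Matrix.sub_apply,
    single_apply, Matrix.add_apply, Matrix.smul_apply, Fin.sum_univ_three, and_true, one_ne_zero,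
    and_false, ↓reduceIte, sub_zero, true_and, false_and, mul_ite, mul_zero, Fin.reduceEq, add_zero,
    ite_mul, zero_mul, zero_ne_one, zero_sub, mul_neg, neg_mul, one_mul, sub_self, zero_add,
    ite_self, neg_zero, neg_neg, ofReal_sub]
  field_simp
  ring

theorem lovasz_primal_value (α : ℝ) (hα : 0 < α) (hα' : α ≤ Real.pi / 4) :
    star Phi ⬝ᵥ (((1 : M3) ⊗ₖ ρmat α + Tmat α) *ᵥ Phi) =
      ((2 + Real.cos α ^ 2 + 1 / Real.cos α ^ 2 : ℝ) : ℂ) := by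
  have hcos : Real.cos α ≠ 0 :=
    (Real.cos_pos_of_mem_Ioo ⟨by linarith [Real.pi_pos], by linarith [Real.pi_pos]⟩).ne'
  simp only [Tmat, add_mulVec, dotProduct_add, Phi_eq_vec_one,
    star_vec_one_dotProduct_kronecker_mulVec_vec_one, transpose_one, Matrix.mul_one, trace_ρmat,
    trace_T2_mul_transpose_T1 hcos, trace_ket_mul_transpose_self]
  push_cast
  ring
end
end

section
/- For 0 < α ≤ π/4, let R_A = (2 − sin²α)|0⟩⟨0| + (1 + sec²α)|1⟩⟨1|. Then tr_A[P_α (R_A ⊗ I)] = ((1+sec²α)sin²α/(1+sin²α))|0⟩⟨0| + |1⟩⟨1| + ((1+sec²α)cos²α/(1+cos²α))|2⟩⟨2| ≤ I₃, and tr R_A = 2 + cos²α + sec²α. Hence R_A is feasible for the primal quantum fractional packing SDP with value 2 + cos²α + sec²α. -/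
/-
`R_A` is diagonal, so `tr_A[P (R_A ⊗ I)] = ∑ₖ rₖ Pₖ` with `Pₖ` the `k`-th diagonal block of `P`
along the `A` factor; the two blocks that meet `supp R_A` are diagonal. The middle entry of the
result is `1` because `2 - sin²α = 1 + cos²α`, the last because `(1 + sec²α) cos²α = 1 + cos²α`,
and the first is `≤ 1` exactly when `tan²α ≤ 1`, i.e. for `|α| ≤ π/4`.
-/

open Matrix Kronecker Complex ComplexOrder

noncomputable section

def RA (α : ℝ) : M3 :=
  ((2 - Real.sin α ^ 2 : ℝ) : ℂ) • ket 0 0 + ((1 + 1 / Real.cos α ^ 2 : ℝ) : ℂ) • ket 1 1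

def Dmat (α : ℝ) : M3 :=
  (((1 + 1 / Real.cos α ^ 2) * Real.sin α ^ 2 / (1 + Real.sin α ^ 2) : ℝ) : ℂ) • ket 0 0 +
  ket 1 1 +
  (((1 + 1 / Real.cos α ^ 2) * Real.cos α ^ 2 / (1 + Real.cos α ^ 2) : ℝ) : ℂ) • ket 2 2

lemma trA_mul_diagonal_kronecker_one (M : M9) (r : Fin 3 → ℂ) :
    trA (M * (diagonal r ⊗ₖ (1 : M3))) = ∑ k, r k • Matrix.of fun i j => M (k, i) (k, j) := by
  ext i j
  simp [trA, mul_apply, Fintype.sum_prod_type, diagonal_apply, one_apply, Matrix.sum_apply,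
    mul_comm]

lemma Real.sin_sq_le_cos_sq_of_abs_le_pi_div_four {x : ℝ} (hx : |x| ≤ Real.pi / 4) :
    Real.sin x ^ 2 ≤ Real.cos x ^ 2 := by
  rw [← sub_nonneg, ← Real.cos_two_mul']
  apply Real.cos_nonneg_of_mem_Icc
  constructor <;> linarith [abs_le.mp hx]

lemma one_add_one_div_sq_mul_sq_div_eq_one {c : ℝ} (hc : c ≠ 0) :
    (1 + 1 / c ^ 2) * c ^ 2 / (1 + c ^ 2) = 1 := by
  field_simp
  ring

lemma one_add_one_div_sq_mul_sq_div_le_one {s c : ℝ} (h : s ^ 2 ≤ c ^ 2) :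
    (1 + 1 / c ^ 2) * s ^ 2 / (1 + s ^ 2) ≤ 1 := by
  have : s ^ 2 / c ^ 2 ≤ 1 := div_le_one_of_le₀ h (sq_nonneg c)
  rw [div_le_one (by positivity), add_mul, one_mul, one_div_mul_eq_div]
  linarith

lemma RA_eq_diagonal (α : ℝ) :
    RA α = diagonal ![((1 + Real.cos α ^ 2 : ℝ) : ℂ), ((1 + 1 / Real.cos α ^ 2 : ℝ) : ℂ), 0] := by
  have h : 2 - Real.sin α ^ 2 = 1 + Real.cos α ^ 2 := by linarith [Real.sin_sq_add_cos_sq α]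
  ext i j
  fin_cases i <;> fin_cases j <;> simp [RA, ket, h]

lemma Dmat_eq_diagonal {α : ℝ} (hc : Real.cos α ≠ 0) :
    Dmat α = diagonal
      ![(((1 + 1 / Real.cos α ^ 2) * Real.sin α ^ 2 / (1 + Real.sin α ^ 2) : ℝ) : ℂ), 1, 1] := by
  rw [Dmat, one_add_one_div_sq_mul_sq_div_eq_one hc, Complex.ofReal_one, one_smul]
  ext i j
  fin_cases i <;> fin_cases j <;> simp [ket]

lemma Pproj_block_zero (α : ℝ) :
    (Matrix.of fun i j => Pproj α (0, i) (0, j)) =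
      ((1 / (1 + Real.cos α ^ 2) : ℝ) : ℂ) • ket 1 1 := by
  ext i j
  fin_cases i <;> fin_cases j <;> simp [Pproj, u, v, ket, vecMulVec_apply, -Complex.ofReal_cos]
  norm_cast
  field_simp
  rw [Real.sq_sqrt (by positivity)]

lemma Pproj_block_one (α : ℝ) :
    (Matrix.of fun i j => Pproj α (1, i) (1, j)) =
      ((Real.sin α ^ 2 / (1 + Real.sin α ^ 2) : ℝ) : ℂ) • ket 0 0 +
      ((Real.cos α ^ 2 / (1 + Real.cos α ^ 2) : ℝ) : ℂ) • ket 2 2 := by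
  ext i j
  fin_cases i <;> fin_cases j <;>
    simp [Pproj, u, v, ket, vecMulVec_apply, -Complex.ofReal_cos, -Complex.ofReal_sin] <;>
    norm_cast <;> field_simp <;> rw [Real.sq_sqrt (by positivity)]

lemma trA_Pproj_mul_RA_kronecker_one (α : ℝ) : trA (Pproj α * (RA α ⊗ₖ (1 : M3))) = Dmat α := by
  rw [RA_eq_diagonal, trA_mul_diagonal_kronecker_one, Fin.sum_univ_three, Pproj_block_zero,
    Pproj_block_one]
  have hc : (1 + Real.cos α ^ 2) * (1 / (1 + Real.cos α ^ 2)) = 1 :=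
    mul_one_div_cancel (by positivity)
  simp only [cons_val, zero_smul, add_zero, smul_smul, smul_add, ← Complex.ofReal_mul, hc,
    Complex.ofReal_one, one_smul, ← mul_div_assoc]
  rw [Dmat]
  abel

lemma one_sub_Dmat_posSemidef {α : ℝ} (hc : Real.cos α ≠ 0)
    (h : Real.sin α ^ 2 ≤ Real.cos α ^ 2) : ((1 : M3) - Dmat α).PosSemidef := by
  rw [Dmat_eq_diagonal hc, ← diagonal_one, diagonal_sub, posSemidef_diagonal_iff]
  intro i
  fin_cases i
  · convert Complex.zero_le_real.mpr
      (sub_nonneg.mpr (one_add_one_div_sq_mul_sq_div_le_one h)) using 1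
    simp
  all_goals simp

lemma trace_RA (α : ℝ) :
    (RA α).trace = ((2 + Real.cos α ^ 2 + 1 / Real.cos α ^ 2 : ℝ) : ℂ) := by
  rw [RA_eq_diagonal, trace_diagonal, Fin.sum_univ_three]
  push_cast
  ring

theorem packing_primal_feasible (α : ℝ) (hα : 0 < α) (hα' : α ≤ Real.pi / 4) :
    trA (Pproj α * (RA α ⊗ₖ (1 : M3))) = Dmat α ∧
    ((1 : M3) - Dmat α).PosSemidef ∧
    (RA α).trace = ((2 + Real.cos α ^ 2 + 1 / Real.cos α ^ 2 : ℝ) : ℂ) := by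
  have hpi := Real.pi_pos
  have hcos : Real.cos α ≠ 0 := (Real.cos_pos_of_mem_Ioo ⟨by linarith, by linarith⟩).ne'
  have hsin_le_cos :=
    Real.sin_sq_le_cos_sq_of_abs_le_pi_div_four (abs_le.mpr ⟨by linarith, hα'⟩)
  exact ⟨trA_Pproj_mul_RA_kronecker_one α, one_sub_Dmat_posSemidef hcos hsin_le_cos, trace_RA α⟩
end
end
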